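/- Let λ be an isolated point of spec(A), and δ^±(λ) the distances from λ to the nearest spectral points strictly above/below λ. The following are equivalent: (1) F_L^1(t) = dist(t, spec(A)) for a single t in the open interval (λ − δ^-(λ)/2, λ + δ^+(λ)/2); (2) F_L^1(s) = dist(s, spec(A)) for all s in the closed interval [λ − δ^-(λ)/2, λ + δ^+(λ)/2]; (3) L ∩ ker(A − λ) ≠ {0}. -/

import Mathlib

open scoped InnerProductSpace

variable {H : Type*} [NormedAddCommGroup H] [InnerProductSpace ℂ H] [CompleteSpace H]

/-- `Fapp A L j t` : the `j`-th min-max value of `‖(A-t)u‖/‖u‖` over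
`j`-dimensional subspaces of `L`. -/
noncomputable def Fapp (A : H →L[ℂ] H) (L : Submodule ℂ H) (j : ℕ) (t : ℝ) : ℝ :=
  sInf {r : ℝ | 0 ≤ r ∧ ∃ V : Submodule ℂ H, V ≤ L ∧ Module.finrank ℂ V = j ∧
    ∀ u ∈ V, ‖A u - (t : ℂ) • u‖ ≤ r * ‖u‖}

/-- `dd A j t` : the `j`-th min-max value of `‖(A-t)u‖/‖u‖` over all
`j`-dimensional subspaces of the space. -/
noncomputable def dd (A : H →L[ℂ] H) (j : ℕ) (t : ℝ) : ℝ :=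
  sInf {r : ℝ | 0 ≤ r ∧ ∃ V : Submodule ℂ H, Module.finrank ℂ V = j ∧
    ∀ u ∈ V, ‖A u - (t : ℂ) • u‖ ≤ r * ‖u‖}

/-- `tr 1_{[a,b]}(A) ≥ j` : there is a `j`-dimensional subspace on which the
quadratic form of `(A-a)(A-b)` is non-positive. -/
def countGeIcc (A : H →L[ℂ] H) (a b : ℝ) (j : ℕ) : Prop :=
  ∃ V : Submodule ℂ H, Module.finrank ℂ V = j ∧
    ∀ u ∈ V, (inner ℂ (A u - (a : ℂ) • u) (A u - (b : ℂ) • u) : ℂ).re ≤ 0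

/-- `tr 1_{(a,b]}(A) ≥ j`. -/
def countGeIoc (A : H →L[ℂ] H) (a b : ℝ) (j : ℕ) : Prop :=
  ∃ V : Submodule ℂ H, Module.finrank ℂ V = j ∧
    (∀ u ∈ V, (inner ℂ (A u - (a : ℂ) • u) (A u - (b : ℂ) • u) : ℂ).re ≤ 0) ∧
    V ⊓ LinearMap.ker (A - (a : ℂ) • (1 : H →L[ℂ] H)).toLinearMap = ⊥

/-- `tr 1_{[a,b)}(A) ≥ j`. -/
def countGeIco (A : H →L[ℂ] H) (a b : ℝ) (j : ℕ) : Prop :=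
  ∃ V : Submodule ℂ H, Module.finrank ℂ V = j ∧
    (∀ u ∈ V, (inner ℂ (A u - (a : ℂ) • u) (A u - (b : ℂ) • u) : ℂ).re ≤ 0) ∧
    V ⊓ LinearMap.ker (A - (b : ℂ) • (1 : H →L[ℂ] H)).toLinearMap = ⊥

/-- `nminus A j t` : the `j`-th spectral point of `A` to the left of `t`,
counting multiplicities, i.e. `sup {s < t : tr 1_{(s,t]}(A) ≥ j}`. -/
noncomputable def nminus (A : H →L[ℂ] H) (j : ℕ) (t : ℝ) : ℝ :=
  sSup {s : ℝ | s < t ∧ countGeIoc A s t j}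

/-- `nplus A j t` : the `j`-th spectral point of `A` to the right of `t`. -/
noncomputable def nplus (A : H →L[ℂ] H) (j : ℕ) (t : ℝ) : ℝ :=
  sInf {s : ℝ | t < s ∧ countGeIco A t s j}

/-- The real spectrum of `A`. -/
def specRe (A : H →L[ℂ] H) : Set ℝ := {x : ℝ | (x : ℂ) ∈ spectrum ℂ A}

open Metric Set

/-! Since `A` is self-adjoint, `‖(A - t) u‖ ≥ dist(t, spec A) ‖u‖`, so `F_L^1 ≥ dist(·, spec A)`;
on the closed half-gap interval this distance is `|t - λ|`. An eigenvector `u ∈ L` for `λ` gives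
`F_L^1(t) ≤ ‖(A - t) u‖ / ‖u‖ = |t - λ|`, hence equality on the whole interval. Conversely, let
`t` lie in the open half-gap interval with `F_L^1(t) = |t - λ|`, attained at a unit vector `u ∈ L`
(compactness of the unit sphere of `L`). All spectral points other than `λ` are farther than
`|t - λ|` from `t`, so `(t - λ)² + c (x - λ)² ≤ (x - t)²` on `spec A` for some `c > 0`; the
functional calculus turns this into `(t - λ)² + c ‖(A - λ) u‖² ≤ ‖(A - t) u‖² = (t - λ)²`, whence
`A u = λ u`. -/

lemma cfc_sub_sq {A : H →L[ℂ] H} (hA : IsSelfAdjoint A) (a : ℝ) :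
    cfc (fun x : ℝ => (x - a) ^ 2) A = (A - algebraMap ℝ _ a) ^ 2 := by
  rw [cfc_pow _ 2 A, cfc_sub _ _ A, cfc_id' ℝ A, cfc_const a A]

lemma re_inner_cfc_sub_sq {A : H →L[ℂ] H} (hA : IsSelfAdjoint A) (a : ℝ) (u : H) :
    RCLike.re ⟪cfc (fun x : ℝ => (x - a) ^ 2) A u, u⟫_ℂ = ‖A u - (a : ℂ) • u‖ ^ 2 := by
  have hB : IsSelfAdjoint (A - algebraMap ℝ (H →L[ℂ] H) a) :=
    hA.sub (.algebraMap _ (.all a))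
  have hBu : (A - algebraMap ℝ (H →L[ℂ] H) a) u = A u - (a : ℂ) • u := by
    simp [Algebra.algebraMap_eq_smul_one, Complex.coe_smul]
  rw [cfc_sub_sq hA, sq, mul_apply_eq_comp, ← ContinuousLinearMap.adjoint_inner_right,
    hB.adjoint_eq, inner_self_eq_norm_sq, hBu]

lemma norm_sq_add_le_of_spectrum {A : H →L[ℂ] H} (hA : IsSelfAdjoint A) {a t e c : ℝ}
    (h : ∀ x ∈ spectrum ℝ A, e + c * (x - a) ^ 2 ≤ (x - t) ^ 2) (u : H) :
    e * ‖u‖ ^ 2 + c * ‖A u - (a : ℂ) • u‖ ^ 2 ≤ ‖A u - (t : ℂ) • u‖ ^ 2 := by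
  have hle := (ContinuousLinearMap.le_def _ _).1 (cfc_mono h) |>.re_inner_nonneg_left u
  rw [cfc_const_add e _ A, cfc_const_mul c _ A] at hle
  rw [← re_inner_cfc_sub_sq hA t u, ← re_inner_cfc_sub_sq hA a u]
  simp only [Algebra.algebraMap_eq_smul_one] at hle
  simp only [sub_apply, add_apply, smul_apply, one_apply_eq_self, ← Complex.coe_smul,
    inner_sub_left, inner_add_left, inner_smul_left, Complex.conj_ofReal, map_sub, map_add,
    RCLike.re_to_complex, Complex.re_ofReal_mul] at hle ⊢
  rw [show (⟪u, u⟫_ℂ).re = ‖u‖ ^ 2 from inner_self_eq_norm_sq (𝕜 := ℂ) u] at hle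
  linarith

lemma eq_or_le_or_le_of_gap {S : Set ℝ} {lam δm δp x : ℝ}
    (hgap : S ∩ Ioo (lam - δm) (lam + δp) ⊆ {lam}) (hx : x ∈ S) :
    x = lam ∨ x ≤ lam - δm ∨ lam + δp ≤ x := by
  by_contra! h
  exact h.1 (hgap ⟨hx, h.2.1, h.2.2⟩)

lemma infDist_eq_abs_sub_of_gap {S : Set ℝ} {lam δm δp s : ℝ} (hlam : lam ∈ S)
    (hgap : S ∩ Ioo (lam - δm) (lam + δp) ⊆ {lam}) (hδm : 0 ≤ δm) (hδp : 0 ≤ δp)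
    (hs : s ∈ Icc (lam - δm / 2) (lam + δp / 2)) :
    infDist s S = |s - lam| := by
  refine le_antisymm (Real.dist_eq s lam ▸ infDist_le_dist_of_mem hlam)
    ((le_infDist ⟨lam, hlam⟩).2 fun x hx => ?_)
  rw [Real.dist_eq]
  obtain ⟨hs₁, hs₂⟩ := hs
  rcases eq_or_le_or_le_of_gap hgap hx with rfl | hx | hx
  · rfl
  all_goals cases abs_cases (s - lam) <;> cases abs_cases (s - x) <;> linarith

lemma exists_pos_sq_add_mul_sq_le_of_gap {S : Set ℝ} {lam δm δp t : ℝ}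
    (hgap : S ∩ Ioo (lam - δm) (lam + δp) ⊆ {lam}) (hδm : 0 < δm) (hδp : 0 < δp)
    (ht : t ∈ Ioo (lam - δm / 2) (lam + δp / 2)) :
    ∃ c > 0, ∀ x ∈ S, (t - lam) ^ 2 + c * (x - lam) ^ 2 ≤ (x - t) ^ 2 := by
  obtain ⟨ht₁, ht₂⟩ := ht
  set κ := max (2 * (t - lam) / δp) (2 * (lam - t) / δm)
  have hκp : 2 * (t - lam) ≤ κ * δp := (div_le_iff₀ hδp).1 (le_max_left _ _)
  have hκm : 2 * (lam - t) ≤ κ * δm := (div_le_iff₀ hδm).1 (le_max_right _ _)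
  have hκ0 : 0 ≤ κ := by
    rcases le_total t lam with h | h
    · exact (div_nonneg (by linarith) hδm.le).trans (le_max_right _ _)
    · exact (div_nonneg (by linarith) hδp.le).trans (le_max_left _ _)
  have hκ1 : κ < 1 :=
    max_lt ((div_lt_one hδp).2 (by linarith)) ((div_lt_one hδm).2 (by linarith))
  refine ⟨1 - κ, by linarith, fun x hx => ?_⟩
  -- `(x - t)² - (t - lam)² - (1 - κ)(x - lam)² = (x - lam) (κ (x - lam) + 2 (lam - t))`, and both
  -- factors have the same sign outside the gap.
  rcases eq_or_le_or_le_of_gap hgap hx with rfl | hx | hx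
  · nlinarith
  · have : κ * δm ≤ κ * (lam - x) := mul_le_mul_of_nonneg_left (by linarith) hκ0
    have hfactor : 0 ≤ κ * (lam - x) - 2 * (lam - t) := by linarith
    nlinarith [mul_nonneg (by linarith : 0 ≤ lam - x) hfactor]
  · have : κ * δp ≤ κ * (x - lam) := mul_le_mul_of_nonneg_left (by linarith) hκ0
    have hfactor : 0 ≤ κ * (x - lam) - 2 * (t - lam) := by linarith
    nlinarith [mul_nonneg (by linarith : 0 ≤ x - lam) hfactor]

lemma exists_norm_eq_one_forall_norm_apply_mul_le {𝕜 E F : Type*} [RCLike 𝕜]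
    [NormedAddCommGroup E] [NormedSpace 𝕜 E] [FiniteDimensional 𝕜 E] [Nontrivial E]
    [SeminormedAddCommGroup F] [NormedSpace 𝕜 F] (T : E →L[𝕜] F) :
    ∃ u : E, ‖u‖ = 1 ∧ ∀ w, ‖T u‖ * ‖w‖ ≤ ‖T w‖ := by
  have : ProperSpace E := FiniteDimensional.proper 𝕜 E
  obtain ⟨v, hv⟩ := exists_ne (0 : E)
  obtain ⟨u, hu, hmin⟩ := (isCompact_sphere (0 : E) 1).exists_isMinOn
    ⟨((‖v‖⁻¹ : ℝ) : 𝕜) • v, by simp [norm_smul, hv]⟩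
    (continuous_norm.comp T.continuous).continuousOn
  refine ⟨u, by simpa using hu, fun w => ?_⟩
  rcases eq_or_ne w 0 with rfl | hw
  · simp
  have : ‖T u‖ ≤ ‖T (((‖w‖⁻¹ : ℝ) : 𝕜) • w)‖ :=
    hmin (show ((‖w‖⁻¹ : ℝ) : 𝕜) • w ∈ sphere (0 : E) 1 by simp [norm_smul, hw])
  rw [map_smul, norm_smul, RCLike.norm_ofReal, abs_inv, abs_norm] at this
  rwa [← le_div_iff₀ (by positivity), div_eq_inv_mul]

section

variable {E : Type*} [NormedAddCommGroup E] [InnerProductSpace ℂ E]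
variable {A : E →L[ℂ] E} {L : Submodule ℂ E} {t : ℝ}

lemma Fapp_one_le {u : E} (hu : u ∈ L) (hu0 : u ≠ 0) {r : ℝ} (hr : 0 ≤ r)
    (h : ‖A u - (t : ℂ) • u‖ ≤ r * ‖u‖) : Fapp A L 1 t ≤ r := by
  refine csInf_le ⟨0, fun _ hr' => hr'.1⟩
    ⟨hr, ℂ ∙ u, (Submodule.span_singleton_le_iff_mem u L).2 hu, finrank_span_singleton hu0,
      fun v hv => ?_⟩
  obtain ⟨a, rfl⟩ := Submodule.mem_span_singleton.1 hv
  rw [map_smul, smul_comm, ← smul_sub, norm_smul, norm_smul, mul_left_comm]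
  exact mul_le_mul_of_nonneg_left h (norm_nonneg a)

lemma le_Fapp_one (hL : L ≠ ⊥) {r : ℝ} (h : ∀ u ∈ L, r * ‖u‖ ≤ ‖A u - (t : ℂ) • u‖) :
    r ≤ Fapp A L 1 t := by
  obtain ⟨u, huL, hu0⟩ := (Submodule.ne_bot_iff L).1 hL
  have hbound (v : E) : ‖A v - (t : ℂ) • v‖ ≤ (‖A‖ + |t|) * ‖v‖ := by
    grw [norm_sub_le, A.le_opNorm, norm_smul, Complex.norm_real, Real.norm_eq_abs, add_mul]
  refine le_csInf ⟨_, by positivity, ℂ ∙ u, (Submodule.span_singleton_le_iff_mem u L).2 huL,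
    finrank_span_singleton hu0, fun v _ => hbound v⟩ ?_
  rintro r' ⟨-, V, hVL, hV, hr'⟩
  have := Module.finite_of_finrank_eq_succ hV
  obtain ⟨x, hx0⟩ := Module.finrank_pos_iff_exists_ne_zero.1 (hV ▸ one_pos)
  exact le_of_mul_le_mul_right ((h x (hVL x.2)).trans (hr' x x.2))
    (norm_pos_iff.2 (by simpa using hx0))

lemma exists_norm_eq_one_Fapp_one_eq [FiniteDimensional ℂ L] (hL : L ≠ ⊥) (t : ℝ) :
    ∃ u ∈ L, ‖u‖ = 1 ∧ ‖A u - (t : ℂ) • u‖ = Fapp A L 1 t := by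
  have : Nontrivial L := Submodule.nontrivial_iff_ne_bot.2 hL
  obtain ⟨u, hu, hmin⟩ := exists_norm_eq_one_forall_norm_apply_mul_le
    ((A - (t : ℂ) • 1) ∘L L.subtypeL)
  have hu0 : (u : E) ≠ 0 := norm_ne_zero_iff.1 (hu.trans_ne one_ne_zero)
  simp only [ContinuousLinearMap.comp_apply, sub_apply, smul_apply, one_apply_eq_self,
    Submodule.subtypeL_apply] at hmin
  exact ⟨u, u.2, hu, le_antisymm (le_Fapp_one hL fun w hw => hmin ⟨w, hw⟩)
    (Fapp_one_le u.2 hu0 (norm_nonneg _) (by rw [show ‖(u : E)‖ = 1 from hu, mul_one]))⟩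

lemma specRe_eq_spectrum (A : E →L[ℂ] E) : specRe A = spectrum ℝ A := by
  ext x
  exact (spectrum.algebraMap_mem_iff ℂ).symm

end

lemma infDist_specRe_mul_norm_le {A : H →L[ℂ] H} (hA : IsSelfAdjoint A) (t : ℝ) (u : H) :
    infDist t (specRe A) * ‖u‖ ≤ ‖A u - (t : ℂ) • u‖ := by
  have h (x) (hx : x ∈ spectrum ℝ A) :
      infDist t (specRe A) ^ 2 + 0 * (x - t) ^ 2 ≤ (x - t) ^ 2 := by
    rw [zero_mul, add_zero, ← sq_abs (x - t), abs_sub_comm, ← Real.dist_eq]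
    gcongr
    · exact infDist_nonneg
    · exact infDist_le_dist_of_mem ((specRe_eq_spectrum A).ge hx)
  have := norm_sq_add_le_of_spectrum hA h u
  rw [zero_mul, add_zero, ← mul_pow] at this
  exact le_of_sq_le_sq this (norm_nonneg _)

lemma eq_smul_of_norm_sub_smul_le {A : H →L[ℂ] H} (hA : IsSelfAdjoint A) {lam δm δp t : ℝ}
    (hgap : specRe A ∩ Ioo (lam - δm) (lam + δp) ⊆ {lam}) (hδm : 0 < δm) (hδp : 0 < δp)
    (ht : t ∈ Ioo (lam - δm / 2) (lam + δp / 2)) {u : H}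
    (hu : ‖A u - (t : ℂ) • u‖ ≤ |t - lam| * ‖u‖) :
    A u = (lam : ℂ) • u := by
  rw [specRe_eq_spectrum] at hgap
  obtain ⟨c, hc, hspec⟩ := exists_pos_sq_add_mul_sq_le_of_gap hgap hδm hδp ht
  have h := norm_sq_add_le_of_spectrum hA hspec u
  have hsq : ‖A u - (t : ℂ) • u‖ ^ 2 ≤ (t - lam) ^ 2 * ‖u‖ ^ 2 := by
    rw [← sq_abs (t - lam), ← mul_pow]
    gcongr
  have : ‖A u - (lam : ℂ) • u‖ ^ 2 = 0 := le_antisymm (by nlinarith) (sq_nonneg _)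
  rwa [pow_eq_zero_iff two_ne_zero, norm_eq_zero, sub_eq_zero] at this

lemma exists_eigenvector_of_Fapp_one_eq_infDist {A : H →L[ℂ] H} (hA : IsSelfAdjoint A)
    {L : Submodule ℂ H} [FiniteDimensional ℂ L] (hL : L ≠ ⊥) {lam δm δp t : ℝ}
    (hlam : lam ∈ specRe A) (hgap : specRe A ∩ Ioo (lam - δm) (lam + δp) ⊆ {lam})
    (hδm : 0 < δm) (hδp : 0 < δp) (ht : t ∈ Ioo (lam - δm / 2) (lam + δp / 2))
    (hFt : Fapp A L 1 t = infDist t (specRe A)) :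
    ∃ u ∈ L, u ≠ 0 ∧ A u = (lam : ℂ) • u := by
  obtain ⟨u, huL, hu1, hu⟩ := exists_norm_eq_one_Fapp_one_eq hL t
  have hdist := infDist_eq_abs_sub_of_gap hlam hgap hδm.le hδp.le (Ioo_subset_Icc_self ht)
  refine ⟨u, huL, norm_ne_zero_iff.1 (by simp [hu1]),
    eq_smul_of_norm_sub_smul_le hA hgap hδm hδp ht ?_⟩
  rw [hu, hFt, hdist, hu1, mul_one]

lemma Fapp_one_eq_infDist_of_eigenvector {A : H →L[ℂ] H} (hA : IsSelfAdjoint A)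
    {L : Submodule ℂ H} (hL : L ≠ ⊥) {lam : ℝ} {u : H} (huL : u ∈ L) (hu0 : u ≠ 0)
    (hAu : A u = (lam : ℂ) • u) {s : ℝ} (hs : infDist s (specRe A) = |s - lam|) :
    Fapp A L 1 s = infDist s (specRe A) := by
  refine le_antisymm (hs ▸ Fapp_one_le huL hu0 (abs_nonneg _) ?_)
    (le_Fapp_one hL fun w _ => infDist_specRe_mul_norm_le hA s w)
  rw [hAu, ← sub_smul, norm_smul, ← Complex.ofReal_sub, Complex.norm_real, Real.norm_eq_abs,
    abs_sub_comm]

/-- for an isolated spectral point `λ` whose distances to the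
spectrum strictly below/above are at least `δm`/`δp`, the equality
`F_L^1 = dist(·, spec A)` at a single point of the open half-gap interval, the
same equality on the whole closed half-gap interval, and
`L ∩ ker(A - λ) ≠ {0}` are all equivalent. -/
theorem stmt_7 (A : H →L[ℂ] H) (hA : IsSelfAdjoint A)
    (L : Submodule ℂ H) [FiniteDimensional ℂ L] (hL : 1 ≤ Module.finrank ℂ L)
    (lam δm δp : ℝ) (hlam : lam ∈ specRe A) (hδm : 0 < δm) (hδp : 0 < δp)
    (hgap : specRe A ∩ Set.Ioo (lam - δm) (lam + δp) ⊆ {lam}) :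
    ((∃ t ∈ Set.Ioo (lam - δm / 2) (lam + δp / 2),
        Fapp A L 1 t = Metric.infDist t (specRe A)) ↔
      (∀ s ∈ Set.Icc (lam - δm / 2) (lam + δp / 2),
        Fapp A L 1 s = Metric.infDist s (specRe A))) ∧
    ((∀ s ∈ Set.Icc (lam - δm / 2) (lam + δp / 2),
        Fapp A L 1 s = Metric.infDist s (specRe A)) ↔
      L ⊓ LinearMap.ker (A - (lam : ℂ) • (1 : H →L[ℂ] H)).toLinearMap ≠ ⊥) := by
  have hL' : L ≠ ⊥ := Submodule.one_le_finrank_iff.1 hL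
  have hlam_mem : lam ∈ Ioo (lam - δm / 2) (lam + δp / 2) := ⟨by linarith, by linarith⟩
  have tfae : [∃ t ∈ Ioo (lam - δm / 2) (lam + δp / 2), Fapp A L 1 t = infDist t (specRe A),
      ∀ s ∈ Icc (lam - δm / 2) (lam + δp / 2), Fapp A L 1 s = infDist s (specRe A),
      L ⊓ LinearMap.ker (A - (lam : ℂ) • (1 : H →L[ℂ] H)).toLinearMap ≠ ⊥].TFAE := by
    tfae_have 1 → 3 := fun ⟨t, ht, hFt⟩ => by
      obtain ⟨u, huL, hu0, hAu⟩ :=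
        exists_eigenvector_of_Fapp_one_eq_infDist hA hL' hlam hgap hδm hδp ht hFt
      exact (Submodule.ne_bot_iff _).2 ⟨u, ⟨huL, by simp [hAu]⟩, hu0⟩
    tfae_have 3 → 2 := fun h s hs => by
      obtain ⟨u, ⟨huL, huK⟩, hu0⟩ := (Submodule.ne_bot_iff _).1 h
      exact Fapp_one_eq_infDist_of_eigenvector hA hL' huL hu0 (by simpa [sub_eq_zero] using huK)
        (infDist_eq_abs_sub_of_gap hlam hgap hδm.le hδp.le hs)
    tfae_have 2 → 1 := fun h => ⟨lam, hlam_mem, h lam (Ioo_subset_Icc_self hlam_mem)⟩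
    tfae_finish
  exact ⟨tfae.out 0 1, tfae.out 1 2⟩
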